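/- arXiv:1604.04173 — 4 statements merged into one kernel-verified Lean document; each statement's English description precedes it below -/
import Mathlib

section
/- (Full conformal anti-conservativeness) In the setting of the full conformal prediction interval, assume additionally that for all y ∈ R the fitted absolute residuals R_{y,1},...,R_{y,n} have a continuous joint distribution (so all residuals are distinct almost surely). Then P(Y_{n+1} ∈ C_conf(X_{n+1})) ≤ 1-α + 1/(n+1). -/
/-!
Permuting the data permutes the residuals, because the fit is symmetric, and leaves the law of
i.i.d. data unchanged; hence the rank of the test residual among all `n + 1` residuals has the same
law as the rank of any other one. Ties do not matter: if `j₀` has the largest residual among the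
indices of rank `≤ k`, all of them are counted in the rank of `j₀`, so at most `k` indices have
rank `≤ k`. Summing over the `n + 1` indices gives `(n + 1) P(rank ≤ k) ≤ k`, and
`k = ⌈(1 - α)(n + 1)⌉ < (1 - α)(n + 1) + 1`.
-/

open MeasureTheory Finset

open scoped Classical ENNReal

lemma MeasureTheory.sum_measure_le_of_card_mem_le {ι Ω : Type*} [Fintype ι] [MeasurableSpace Ω]
    (μ : Measure Ω) {s : ι → Set Ω} (hs : ∀ i, MeasurableSet (s i)) {k : ℕ}
    (hk : ∀ ω, #{i | ω ∈ s i} ≤ k) :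
    ∑ i, μ (s i) ≤ k * μ Set.univ := by
  calc ∑ i, μ (s i) = ∫⁻ ω, ∑ i, (s i).indicator 1 ω ∂μ := by
        rw [lintegral_finsetSum _ fun i _ => measurable_one.indicator (hs i)]
        simp_rw [lintegral_indicator_one (hs _)]
    _ ≤ ∫⁻ _, (k : ℝ≥0∞) ∂μ := lintegral_mono fun ω => by
        simpa [Set.indicator_apply, ← card_filter] using (Nat.cast_le (α := ℝ≥0∞)).mpr (hk ω)
    _ = k * μ Set.univ := lintegral_const _

lemma MeasureTheory.measurePreserving_comp_perm {ι β : Type*} [Fintype ι] [MeasurableSpace β]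
    (P : Measure β) [SigmaFinite P] (σ : Equiv.Perm ι) :
    MeasurePreserving (fun z : ι → β => z ∘ σ) (Measure.pi fun _ => P) (Measure.pi fun _ => P) := by
  convert measurePreserving_piCongrLeft (fun _ : ι => P) σ.symm
  ext z
  simp [MeasurableEquiv.coe_piCongrLeft, Equiv.piCongrLeft_apply]

lemma ENNReal.natCeil_mul_div_le (t : ℝ) {N : ℕ} (hN : N ≠ 0) :
    (⌈t * N⌉₊ : ℝ≥0∞) / N ≤ ENNReal.ofReal (t + 1 / N) := by
  have hN' : (0 : ℝ) < N := by positivity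
  rw [← ENNReal.ofReal_natCast, ← ENNReal.ofReal_natCast, ← ENNReal.ofReal_div_of_pos hN',
    ENNReal.ofReal_le_ofReal_iff']
  rcases Nat.eq_zero_or_pos ⌈t * N⌉₊ with h0 | hpos
  · simp [h0]
  · left
    have ht : 0 ≤ t * N := (Nat.ceil_pos.mp hpos).le
    rw [div_le_iff₀ hN', add_mul, one_div_mul_cancel hN'.ne']
    exact (Nat.ceil_lt_add_one ht).le

namespace FullConformal

section Rank

variable {ι α : Type*} [Fintype ι] [LinearOrder α]

noncomputable def rank (f : ι → α) (j : ι) : ℕ := #{i | f i ≤ f j}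

lemma rank_comp_perm (f : ι → α) (σ : Equiv.Perm ι) (j : ι) :
    rank (f ∘ σ) j = rank f (σ j) :=
  card_equiv σ (by simp)

lemma card_rank_le_le (f : ι → α) (k : ℕ) : #{j | rank f j ≤ k} ≤ k := by
  obtain h | ⟨j₀, hj₀, hmax⟩ := (univ.filter fun j => rank f j ≤ k).eq_empty_or_nonempty.imp id
    fun h => exists_max_image _ f h
  · simp [h]
  · calc #{j | rank f j ≤ k} ≤ rank f j₀ := card_le_card fun j hj => by simpa using hmax j hj
      _ ≤ k := (mem_filter.mp hj₀).2

lemma rank_last {n : ℕ} (f : Fin (n + 1) → α) :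
    rank f (Fin.last n) = 1 + #{i : Fin n | f i.castSucc ≤ f (Fin.last n)} := by
  rw [rank, card_filter, card_filter, Fin.sum_univ_castSucc, if_pos le_rfl, add_comm]

lemma measurable_rank {Ω : Type*} [MeasurableSpace Ω] [TopologicalSpace α] [MeasurableSpace α]
    [OpensMeasurableSpace α] [OrderClosedTopology α] [SecondCountableTopology α]
    {F : Ω → ι → α} (hF : ∀ i, Measurable fun ω => F ω i) (j : ι) :
    Measurable fun ω => rank (F ω) j := by
  simp only [rank, card_filter]
  exact Finset.measurable_sum _ fun i _ =>
    Measurable.ite (measurableSet_le (hF i) (hF j)) measurable_const measurable_const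

end Rank

def scores {ι β : Type*} (S : (ι → β) → β → ℝ) (z : ι → β) : ι → ℝ := fun i => S z (z i)

lemma scores_comp_perm {ι β : Type*} {S : (ι → β) → β → ℝ}
    (hS : ∀ z (σ : Equiv.Perm ι), S (z ∘ σ) = S z) (z : ι → β) (σ : Equiv.Perm ι) :
    scores S (z ∘ σ) = scores S z ∘ σ := by
  ext i
  simp [scores, hS]

lemma measurable_scores_apply {ι β : Type*} [MeasurableSpace β] {S : (ι → β) → β → ℝ}
    (hS : Measurable fun p : (ι → β) × β => S p.1 p.2) (i : ι) :
    Measurable fun z => scores S z i :=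
  hS.comp (measurable_id.prodMk (measurable_pi_apply i))

theorem measure_rank_scores_le {ι β : Type*} [Fintype ι] [MeasurableSpace β]
    (P : Measure β) [IsProbabilityMeasure P]
    {S : (ι → β) → β → ℝ} (hS : ∀ z (σ : Equiv.Perm ι), S (z ∘ σ) = S z)
    (hSm : Measurable fun p : (ι → β) × β => S p.1 p.2) (j : ι) (k : ℕ) :
    Measure.pi (fun _ => P) {z | rank (scores S z) j ≤ k} ≤ k / Fintype.card ι := by
  set μ := Measure.pi fun _ : ι => P
  have hE : ∀ i, MeasurableSet {z | rank (scores S z) i ≤ k} := fun i =>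
    measurable_rank (measurable_scores_apply hSm) i measurableSet_Iic
  have h_eq : ∀ i, μ {z | rank (scores S z) i ≤ k} = μ {z | rank (scores S z) j ≤ k} := by
    intro i
    have hpre : (· ∘ Equiv.swap i j) ⁻¹' {z | rank (scores S z) j ≤ k} =
        {z | rank (scores S z) i ≤ k} := by
      ext z
      simp [scores_comp_perm hS, rank_comp_perm]
    rw [← hpre, (measurePreserving_comp_perm P _).measure_preimage (hE j).nullMeasurableSet]
  have h_sum : ∑ i, μ {z | rank (scores S z) i ≤ k} ≤ k := by
    simpa using sum_measure_le_of_card_mem_le μ hE fun z => by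
      simpa using card_rank_le_le (scores S z) k
  rw [ENNReal.le_div_iff_mul_le (.inl (by have : Nonempty ι := ⟨j⟩; simp)) (by simp), mul_comm]
  simpa [h_eq] using h_sum

end FullConformal

theorem full_conformal_anticonservative_general
    {E : Type*} [MeasurableSpace E] (P : Measure (E × ℝ)) [IsProbabilityMeasure P]
    (n : ℕ) (A : (Fin (n + 1) → E × ℝ) → E → ℝ)
    (hsym : ∀ (z : Fin (n + 1) → E × ℝ) (σ : Equiv.Perm (Fin (n + 1))),
      A (z ∘ σ) = A z)
    (hmeas : Measurable fun p : (Fin (n + 1) → E × ℝ) × E => A p.1 p.2)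
    (α : ℝ) :
    (Measure.pi fun _ : Fin (n + 1) => P)
        {z | 1 + (Finset.univ.filter fun i : Fin n =>
              |(z i.castSucc).2 - A z (z i.castSucc).1|
                ≤ |(z (Fin.last n)).2 - A z (z (Fin.last n)).1|).card
          ≤ ⌈(1 - α) * ((n : ℝ) + 1)⌉₊}
      ≤ ENNReal.ofReal (1 - α + 1 / ((n : ℝ) + 1)) := by
  set S : (Fin (n + 1) → E × ℝ) → E × ℝ → ℝ := fun z p => |p.2 - A z p.1|
  have hS : ∀ z (σ : Equiv.Perm (Fin (n + 1))), S (z ∘ σ) = S z := by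
    simp [S, hsym]
  have hSm : Measurable fun p : (Fin (n + 1) → E × ℝ) × (E × ℝ) => S p.1 p.2 :=
    (measurable_snd.snd.sub (hmeas.comp (measurable_fst.prodMk measurable_snd.fst))).abs
  have h_event :=
    FullConformal.measure_rank_scores_le P hS hSm (Fin.last n) ⌈(1 - α) * ((n : ℝ) + 1)⌉₊
  simp only [FullConformal.rank_last, FullConformal.scores, S, Fintype.card_fin] at h_event
  refine h_event.trans ?_
  simpa using ENNReal.natCeil_mul_div_le (1 - α) n.succ_ne_zero

/-- Full conformal anti-conservativeness: in the full conformal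
setting (i.i.d. data, symmetric regression algorithm `A` trained on the augmented
data set where the response of the last point is replaced by the trial value `y`),
if for every `y ∈ ℝ` the fitted absolute residuals of the augmented data set have
a continuous joint distribution (so all residuals are distinct almost surely),
then `P(Y_{n+1} ∈ C_conf(X_{n+1})) ≤ 1-α + 1/(n+1)`. -/
theorem full_conformal_anticonservative
    {E : Type*} [MeasurableSpace E] (P : Measure (E × ℝ)) [IsProbabilityMeasure P]
    (n : ℕ) (A : (Fin (n + 1) → E × ℝ) → E → ℝ)
    (hsym : ∀ (z : Fin (n + 1) → E × ℝ) (σ : Equiv.Perm (Fin (n + 1))),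
      A (z ∘ σ) = A z)
    (hmeas : Measurable fun p : (Fin (n + 1) → E × ℝ) × E => A p.1 p.2)
    (α : ℝ) (hα : α ∈ Set.Ioo (0 : ℝ) 1)
    -- continuity of the joint distribution of the augmented residuals, for each trial y :
    (hcont : ∀ y : ℝ,
      (Measure.pi fun _ : Fin (n + 1) => P)
        {z | ∃ i j : Fin (n + 1), i ≠ j ∧
          |((Function.update z (Fin.last n) ((z (Fin.last n)).1, y)) i).2
              - A (Function.update z (Fin.last n) ((z (Fin.last n)).1, y))
                  ((Function.update z (Fin.last n) ((z (Fin.last n)).1, y)) i).1|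
            = |((Function.update z (Fin.last n) ((z (Fin.last n)).1, y)) j).2
              - A (Function.update z (Fin.last n) ((z (Fin.last n)).1, y))
                  ((Function.update z (Fin.last n) ((z (Fin.last n)).1, y)) j).1|} = 0) :
    (Measure.pi fun _ : Fin (n + 1) => P)
        {z | 1 + (Finset.univ.filter fun i : Fin n =>
              |(z i.castSucc).2 - A z (z i.castSucc).1|
                ≤ |(z (Fin.last n)).2 - A z (z (Fin.last n)).1|).card
          ≤ ⌈(1 - α) * ((n : ℝ) + 1)⌉₊}
      ≤ ENNReal.ofReal (1 - α + 1 / ((n : ℝ) + 1)) :=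
  full_conformal_anticonservative_general P n A hsym hmeas α
end

section
/- (Comparing the oracles: CDF bound) Let Y = μ(X) + ε with ε independent of X, ε having a symmetric density about 0 that is nonincreasing on [0,∞), with density f of |ε| having derivative uniformly bounded in absolute value by M > 0. Let μ̂_n be any estimator (independent of (X,Y)), Δ_n(x) = μ̂_n(x) - μ(x), F the CDF of |ε|, and F_n the CDF of |Y - μ̂_n(X)|. Then sup_{t>0} |F_n(t) - F(t)| ≤ (M/2)·E[Δ_n(X)^2], where the expectation is over the randomness of μ̂_n and X. -/
/-!
Conditionally on the estimator and on `X`, the event `|Y - μ̂(X)| ≤ t` is `ε ∈ [Δ - t, Δ + t]`,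
so by Fubini `F_n(t)` is the average of `ψ(Δ) = P(ε ∈ [Δ - t, Δ + t])`, while `F(t) = ψ(0)`.
`ψ` is even, and for `d ≥ 0`, `ψ(d) - ψ(0) = ∫₀^d (f₀(s + t) - f₀(s - t)) ds`; by symmetry
`f₀(s - t) = f₀(t - s)`, so the integrand is at most `M s` (first-order terms cancel) and
`|ψ(d) - ψ(0)| ≤ (M/2) d²`.
-/

open MeasureTheory Set

namespace OracleCDF

variable {g : ℝ → ℝ} {K : NNReal}

lemma abs_intervalIntegral_shift_sub_le_of_nonneg (hg : Function.Even g)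
    (hlip : LipschitzWith K g) (t : ℝ) {d : ℝ} (hd : 0 ≤ d) :
    |(∫ x in (d - t)..(d + t), g x) - ∫ x in (-t)..t, g x| ≤ K * d ^ 2 := by
  have hcont := hlip.continuous
  have hsplit : (∫ x in (d - t)..(d + t), g x) - (∫ x in (-t)..t, g x)
      = ∫ s in (0 : ℝ)..d, (g (s + t) - g (s - t)) := by
    rw [intervalIntegral.integral_interval_sub_interval_comm' (hcont.intervalIntegrable _ _)
      (hcont.intervalIntegrable _ _) (hcont.intervalIntegrable _ _),
      intervalIntegral.integral_sub (Continuous.intervalIntegrable (by fun_prop) _ _)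
        (Continuous.intervalIntegrable (by fun_prop) _ _),
      intervalIntegral.integral_comp_add_right, intervalIntegral.integral_comp_sub_right,
      zero_add, zero_sub]
  rw [hsplit, ← Real.norm_eq_abs]
  calc ‖∫ s in (0 : ℝ)..d, (g (s + t) - g (s - t))‖
      ≤ ∫ s in (0 : ℝ)..d, 2 * K * s := by
        refine intervalIntegral.norm_integral_le_of_norm_le hd (ae_of_all _ fun s hs => ?_)
          (Continuous.intervalIntegrable (by fun_prop) _ _)
        have := hlip.dist_le_mul (s + t) (t - s)
        rw [Real.dist_eq, Real.dist_eq, show s + t - (t - s) = 2 * s by ring, abs_mul,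
          abs_two, abs_of_pos hs.1] at this
        rw [Real.norm_eq_abs, ← neg_sub t s, hg]; linarith
    _ = K * d ^ 2 := by rw [intervalIntegral.integral_const_mul, integral_id]; ring

lemma abs_intervalIntegral_shift_sub_le (hg : Function.Even g) (hlip : LipschitzWith K g)
    (t d : ℝ) : |(∫ x in (d - t)..(d + t), g x) - ∫ x in (-t)..t, g x| ≤ K * d ^ 2 := by
  wlog hd : 0 ≤ d generalizing d
  · have hreflect : (∫ x in (-d - t)..(-d + t), g x) = ∫ x in (d - t)..(d + t), g x := by
      have h := intervalIntegral.integral_comp_neg (a := d - t) (b := d + t) g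
      simp only [hg.eq] at h
      rw [h, neg_add', neg_sub', sub_neg_eq_add]
    simpa [hreflect] using this (-d) (by linarith)
  exact abs_intervalIntegral_shift_sub_le_of_nonneg hg hlip t hd

lemma withDensity_ofReal_measureReal_Icc {f : ℝ → ℝ} (hf : Measurable f) {a b : ℝ} (hab : a ≤ b) :
    (volume.withDensity fun x => ENNReal.ofReal (f x)).real (Icc a b)
      = ∫ x in a..b, max (f x) 0 := by
  rw [measureReal_def, withDensity_apply _ measurableSet_Icc,
    ← integral_toReal hf.ennreal_ofReal.aemeasurable (ae_of_all _ fun _ => ENNReal.ofReal_lt_top),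
    intervalIntegral.integral_of_le hab, integral_Icc_eq_integral_Ioc]
  rfl

/-- `ENNReal.ofReal` truncates, so the density actually used is `max f 0`, again even and
`K`-Lipschitz. -/
lemma abs_withDensity_measureReal_Icc_shift_sub_le {f : ℝ → ℝ} (hf : Function.Even f)
    (hlip : LipschitzWith K f) {t : ℝ} (ht : 0 ≤ t) (d : ℝ) :
    |(volume.withDensity fun x => ENNReal.ofReal (f x)).real (Icc (d - t) (d + t))
      - (volume.withDensity fun x => ENNReal.ofReal (f x)).real (Icc (-t) t)| ≤ K * d ^ 2 := by
  rw [withDensity_ofReal_measureReal_Icc hlip.continuous.measurable (by linarith),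
    withDensity_ofReal_measureReal_Icc hlip.continuous.measurable (by linarith)]
  exact abs_intervalIntegral_shift_sub_le (g := fun x => max (f x) 0) (hf.left_comp (max · 0))
    (hlip.max_const 0) t d

variable {α : Type*}

lemma mk_preimage_abs_sub_le (Δ : α → ℝ) (t : ℝ) (q : α) :
    Prod.mk q ⁻¹' {p : α × ℝ | |p.2 - Δ p.1| ≤ t} = Icc (Δ q - t) (Δ q + t) := by
  ext e
  simp only [mem_Icc, mem_preimage, mem_ofPred_eq, abs_le]
  constructor <;> rintro ⟨h₁, h₂⟩ <;> constructor <;> linarith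

variable [MeasurableSpace α] {Δ : α → ℝ}

lemma measurableSet_abs_sub_le (hΔ : Measurable Δ) (t : ℝ) :
    MeasurableSet {p : α × ℝ | |p.2 - Δ p.1| ≤ t} :=
  (measurable_snd.sub (hΔ.comp measurable_fst)).abs measurableSet_Iic

lemma measurable_measure_Icc_sub_add (P : Measure ℝ) [SFinite P] (hΔ : Measurable Δ) (t : ℝ) :
    Measurable fun q => P (Icc (Δ q - t) (Δ q + t)) := by
  simpa only [mk_preimage_abs_sub_le] using
    measurable_measure_prodMk_left (ν := P) (measurableSet_abs_sub_le hΔ t)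

lemma measureReal_prod_abs_sub_le (ρ : Measure α) [SFinite ρ] (P : Measure ℝ) [IsFiniteMeasure P]
    (hΔ : Measurable Δ) (t : ℝ) :
    (ρ.prod P).real {p | |p.2 - Δ p.1| ≤ t} = ∫ q, P.real (Icc (Δ q - t) (Δ q + t)) ∂ρ := by
  simp only [measureReal_def, Measure.prod_apply (measurableSet_abs_sub_le hΔ t),
    mk_preimage_abs_sub_le]
  exact (integral_toReal (measurable_measure_Icc_sub_add P hΔ t).aemeasurable
    (ae_of_all _ fun _ => measure_lt_top _ _)).symm

lemma integrable_measureReal_Icc_sub_add (ρ : Measure α) [IsFiniteMeasure ρ] (P : Measure ℝ)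
    [IsFiniteMeasure P] (hΔ : Measurable Δ) (t : ℝ) :
    Integrable (fun q => P.real (Icc (Δ q - t) (Δ q + t))) ρ :=
  .of_bound (measurable_measure_Icc_sub_add P hΔ t).ennreal_toReal.aestronglyMeasurable
    (P.real univ) (ae_of_all _ fun _ => by
      rw [Real.norm_of_nonneg measureReal_nonneg]; exact measureReal_mono (subset_univ _))

end OracleCDF

open OracleCDF

theorem oracle_cdf_bound_general
    {T E : Type*} [MeasurableSpace T] [MeasurableSpace E]
    (ν : Measure T) [IsProbabilityMeasure ν]
    (Px : Measure E) [IsProbabilityMeasure Px]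
    (Pe : Measure ℝ) [IsProbabilityMeasure Pe]
    (f₀ : ℝ → ℝ)
    (hPe : Pe = volume.withDensity fun t => ENNReal.ofReal (f₀ t))
    (hsymm : ∀ t, f₀ (-t) = f₀ t)
    (M : ℝ)
    (hdiff : Differentiable ℝ f₀)
    (hderiv : ∀ t, |deriv (fun s => 2 * f₀ s) t| ≤ M)
    (μReg : E → ℝ) (hmreg : Measurable μReg)
    (μhat : T → E → ℝ)
    (hmeas : Measurable fun p : T × E => μhat p.1 p.2)
    (hint : Integrable (fun p : T × E => (μhat p.1 p.2 - μReg p.2) ^ 2) (ν.prod Px)) :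
    ∀ t > (0 : ℝ),
      |((ν.prod (Px.prod Pe))
            {p : T × E × ℝ | |μReg p.2.1 + p.2.2 - μhat p.1 p.2.1| ≤ t}).toReal
          - (Pe {e : ℝ | |e| ≤ t}).toReal|
        ≤ (M / 2) * ∫ p : T × E, (μhat p.1 p.2 - μReg p.2) ^ 2 ∂(ν.prod Px) := by
  intro t ht
  have hM : 0 ≤ M / 2 := by linarith [(abs_nonneg _).trans (hderiv 0)]
  have hderiv_le : ∀ x, ‖deriv f₀ x‖₊ ≤ (M / 2).toNNReal := fun x => by
    have h := hderiv x
    rw [deriv_const_mul _ (hdiff x), abs_mul, abs_two] at h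
    rw [← NNReal.coe_le_coe, coe_nnnorm, Real.norm_eq_abs, Real.coe_toNNReal _ hM]
    linarith
  have hlip := lipschitzWith_of_nnnorm_deriv_le hdiff hderiv_le
  set Δ : T × E → ℝ := fun q => μhat q.1 q.2 - μReg q.2
  have hΔ : Measurable Δ := hmeas.sub (hmreg.comp measurable_snd)
  have hFn : ((ν.prod (Px.prod Pe))
      {p : T × E × ℝ | |μReg p.2.1 + p.2.2 - μhat p.1 p.2.1| ≤ t}).toReal =
      ∫ q, Pe.real (Icc (Δ q - t) (Δ q + t)) ∂(ν.prod Px) := by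
    rw [← (measurePreserving_prodAssoc ν Px Pe).measure_preimage_equiv, ← measureReal_def,
      ← measureReal_prod_abs_sub_le _ _ hΔ]
    congr 2 with p
    simp only [mem_preimage, mem_ofPred_eq, MeasurableEquiv.prodAssoc, MeasurableEquiv.coe_mk,
      Equiv.prodAssoc_apply, Δ]
    ring_nf
  have hF : (Pe {e : ℝ | |e| ≤ t}).toReal = ∫ _q, Pe.real (Icc (-t) t) ∂(ν.prod Px) := by
    simp [abs_le, Icc_def, measureReal_def]
  rw [hFn, hF, ← integral_sub (integrable_measureReal_Icc_sub_add _ _ hΔ t) (integrable_const _),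
    ← integral_const_mul, ← Real.norm_eq_abs]
  refine norm_integral_le_of_norm_le (hint.const_mul _) (ae_of_all _ fun q => ?_)
  subst hPe
  simpa [hM] using abs_withDensity_measureReal_Icc_shift_sub_le hsymm hlip ht.le (Δ q)

/-- Comparing the oracles: CDF bound: let `Y = μ(X) + ε` with
`ε ~ f₀ dx` independent of `X`, `f₀` symmetric about `0` and nonincreasing on
`[0,∞)`; the density `f = 2 f₀` of `|ε|` has derivative uniformly bounded by `M`.
The estimator `μ̂` (indexed by an independent source of randomness `T` with law `ν`,
hence independent of `(X,Y)`) has estimation error `Δ(x) = μ̂(x) - μ(x)`. With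
`F` the CDF of `|ε|` and `F_n` the CDF of `|Y - μ̂(X)|`, we have
`sup_{t>0} |F_n(t) - F(t)| ≤ (M/2)·E[Δ(X)²]`, the expectation being over the
randomness of `μ̂` and `X`. -/
theorem oracle_cdf_bound
    {T E : Type*} [MeasurableSpace T] [MeasurableSpace E]
    (ν : Measure T) [IsProbabilityMeasure ν]
    (Px : Measure E) [IsProbabilityMeasure Px]
    (Pe : Measure ℝ) [IsProbabilityMeasure Pe]
    (f₀ : ℝ → ℝ)
    (hPe : Pe = volume.withDensity fun t => ENNReal.ofReal (f₀ t))
    (hsymm : ∀ t, f₀ (-t) = f₀ t)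
    (hmono : AntitoneOn f₀ (Set.Ici (0 : ℝ)))
    (M : ℝ) (hM : 0 < M)
    (hdiff : Differentiable ℝ f₀)
    (hderiv : ∀ t, |deriv (fun s => 2 * f₀ s) t| ≤ M)
    (μReg : E → ℝ) (hmreg : Measurable μReg)
    (μhat : T → E → ℝ)
    (hmeas : Measurable fun p : T × E => μhat p.1 p.2)
    (hint : Integrable (fun p : T × E => (μhat p.1 p.2 - μReg p.2) ^ 2) (ν.prod Px)) :
    ∀ t > (0 : ℝ),
      |((ν.prod (Px.prod Pe))
            {p : T × E × ℝ | |μReg p.2.1 + p.2.2 - μhat p.1 p.2.1| ≤ t}).toReal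
          - (Pe {e : ℝ | |e| ≤ t}).toReal|
        ≤ (M / 2) * ∫ p : T × E, (μhat p.1 p.2 - μReg p.2) ^ 2 ∂(ν.prod Px) :=
  oracle_cdf_bound_general ν Px Pe f₀ hPe hsymm M hdiff hderiv μReg hmreg μhat hmeas hint
end

section
/- (Comparing the oracles: quantile bound) Under the conditions of the previous CDF bound, let q_α be the α upper quantile of |ε| and q_{n,α} the α upper quantile of |Y - μ̂_n(X)|. If the density f of |ε| is bounded below by r > 0 on (q_α - η, q_α + η) for some η > (M/(2r))·E[Δ_n(X)^2], then |q_{n,α} - q_α| ≤ (M/(2r))·E[Δ_n(X)^2]. -/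
open MeasureTheory

/-- Comparing the oracles: quantile bound: under the conditions of
the CDF bound (Y = μ(X)+ε, ε ~ f₀ dx independent of X, symmetric nonincreasing
density, |ε| has density f = 2f₀ with derivative bounded by M, μ̂ independent of
(X,Y)), with `q_α` the α upper quantile of `|ε|` (i.e. `F(q_α) = 1-α`) and
`q_{n,α}` the α upper quantile of `|Y - μ̂(X)|`, if the density `f` of `|ε|` is
bounded below by `r > 0` on `(q_α - η, q_α + η)` for some
`η > (M/(2r))·E[Δ(X)²]`, then `|q_{n,α} - q_α| ≤ (M/(2r))·E[Δ(X)²]`. -/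
theorem oracle_quantile_bound
    {T E : Type*} [MeasurableSpace T] [MeasurableSpace E]
    (ν : Measure T) [IsProbabilityMeasure ν]
    (Px : Measure E) [IsProbabilityMeasure Px]
    (Pe : Measure ℝ) [IsProbabilityMeasure Pe]
    (f₀ : ℝ → ℝ)
    (hPe : Pe = volume.withDensity fun t => ENNReal.ofReal (f₀ t))
    (hsymm : ∀ t, f₀ (-t) = f₀ t)
    (hmono : AntitoneOn f₀ (Set.Ici (0 : ℝ)))
    (M : ℝ) (hM : 0 < M)
    (hdiff : Differentiable ℝ f₀)
    (hderiv : ∀ t, |deriv (fun s => 2 * f₀ s) t| ≤ M)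
    (μReg : E → ℝ) (hmreg : Measurable μReg)
    (μhat : T → E → ℝ)
    (hmeas : Measurable fun p : T × E => μhat p.1 p.2)
    (hint : Integrable (fun p : T × E => (μhat p.1 p.2 - μReg p.2) ^ 2) (ν.prod Px))
    (α r η qa qna : ℝ) (hα : α ∈ Set.Ioo (0 : ℝ) 1) (hr : 0 < r)
    (hqa_pos : 0 < qa) (hqna_pos : 0 < qna)
    -- `qa` is the α upper quantile of |ε| :
    (hqa : (Pe {e : ℝ | |e| ≤ qa}).toReal = 1 - α)
    -- `qna` is the α upper quantile of |Y - μ̂(X)| :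
    (hqna : ((ν.prod (Px.prod Pe))
        {p : T × E × ℝ | |μReg p.2.1 + p.2.2 - μhat p.1 p.2.1| ≤ qna}).toReal = 1 - α)
    -- the density f = 2f₀ of |ε| is bounded below by r on (qa - η, qa + η) :
    (hdens : ∀ t ∈ Set.Ioo (qa - η) (qa + η), r ≤ 2 * f₀ t)
    (hη : (M / (2 * r)) * ∫ p : T × E, (μhat p.1 p.2 - μReg p.2) ^ 2 ∂(ν.prod Px) < η) :
    |qna - qa| ≤ (M / (2 * r)) * ∫ p : T × E, (μhat p.1 p.2 - μReg p.2) ^ 2 ∂(ν.prod Px) := by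
  classical
  have hf0cont : Continuous f₀ := hdiff.continuous
  set fp : ℝ → ℝ := fun t => max (f₀ t) 0 with hfp_def
  have hfpcont : Continuous fp := hf0cont.max continuous_const
  have hfp0 : ∀ t, 0 ≤ fp t := fun t => le_max_right _ _
  have hfpeven : ∀ t, fp (-t) = fp t := fun t => by simp only [hfp_def, hsymm t]
  have hofReal : ∀ t, ENNReal.ofReal (f₀ t) = ENNReal.ofReal (fp t) := by
    intro t
    rcases le_total (f₀ t) 0 with h | h
    · simp [hfp_def, max_eq_right h, ENNReal.ofReal_eq_zero.2 h]
    · simp [hfp_def, max_eq_left h]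
  have hlip0 : ∀ x y : ℝ, |f₀ x - f₀ y| ≤ M / 2 * |x - y| := by
    intro x y
    have hd : ∀ t : ℝ, ‖deriv f₀ t‖ ≤ M / 2 := by
      intro t
      have h2 : deriv (fun s => 2 * f₀ s) t = 2 * deriv f₀ t :=
        deriv_const_mul 2 (hdiff t)
      have h3 := hderiv t
      rw [h2, abs_mul, abs_two] at h3
      rw [Real.norm_eq_abs]
      linarith [abs_nonneg (deriv f₀ t)]
    have h := Convex.norm_image_sub_le_of_norm_deriv_le (f := f₀) (s := Set.univ)
      (fun t _ => hdiff t) (fun t _ => hd t) convex_univ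
      (Set.mem_univ y) (Set.mem_univ x)
    simpa [Real.norm_eq_abs] using h
  have hlip : ∀ x y : ℝ, |fp x - fp y| ≤ M / 2 * |x - y| :=
    fun x y => le_trans (abs_max_sub_max_le_abs _ _ _) (hlip0 x y)
  set Φ : ℝ → ℝ := fun x => ∫ t in (0:ℝ)..x, fp t with hΦ_def
  have hii : ∀ a b : ℝ, IntervalIntegrable fp volume a b :=
    fun a b => hfpcont.intervalIntegrable a b
  have hΦab : ∀ a b : ℝ, ∫ t in a..b, fp t = Φ b - Φ a := by
    intro a b
    have h := intervalIntegral.integral_add_adjacent_intervals (hii 0 a) (hii a b)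
    simp only [hΦ_def]
    linarith [h]
  have hΦmono : ∀ a b : ℝ, a ≤ b → Φ a ≤ Φ b := by
    intro a b hab
    have h := intervalIntegral.integral_nonneg (μ := volume) hab (fun u _ => hfp0 u)
    rw [hΦab a b] at h
    linarith
  have hΦodd : ∀ x : ℝ, Φ (-x) = -Φ x := by
    intro x
    have h1 : ∫ t in (0:ℝ)..x, fp (-t) = ∫ t in (-x)..(0:ℝ), fp t := by
      simpa using intervalIntegral.integral_comp_neg (a := (0:ℝ)) (b := x) fp
    have h2 : ∫ t in (0:ℝ)..x, fp (-t) = Φ x := by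
      simp only [hΦ_def]
      exact intervalIntegral.integral_congr fun t _ => hfpeven t
    have h3 : ∫ t in (-x)..(0:ℝ), fp t = Φ 0 - Φ (-x) := hΦab _ _
    have h4 : Φ (0:ℝ) = 0 := intervalIntegral.integral_same
    rw [h2, h3, h4] at h1
    linarith
  have hIcc : ∀ a b : ℝ, a ≤ b → Pe (Set.Icc a b) = ENNReal.ofReal (Φ b - Φ a) := by
    intro a b hab
    rw [hPe, withDensity_apply _ measurableSet_Icc]
    have h1 : ∫⁻ x in Set.Icc a b, ENNReal.ofReal (f₀ x) ∂volume
        = ∫⁻ x in Set.Icc a b, ENNReal.ofReal (fp x) ∂volume :=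
      lintegral_congr fun x => hofReal x
    have hInt : Integrable fp (volume.restrict (Set.Icc a b)) := hfpcont.integrableOn_Icc
    have h2 := MeasureTheory.ofReal_integral_eq_lintegral_ofReal hInt
      (Filter.Eventually.of_forall fun x => hfp0 x)
    rw [h1, ← h2]
    congr 1
    rw [MeasureTheory.integral_Icc_eq_integral_Ioc, ← intervalIntegral.integral_of_le hab,
      hΦab]
  have hF : ∀ c : ℝ, 0 < c → (Pe {e : ℝ | |e| ≤ c}).toReal = 2 * Φ c := by
    intro c hc
    have hset : {e : ℝ | |e| ≤ c} = Set.Icc (-c) c := by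
      ext e; simpa [Set.mem_Icc] using abs_le
    have hΦc : 0 ≤ Φ c := by
      have h := hΦmono 0 c hc.le
      have h4 : Φ (0:ℝ) = 0 := intervalIntegral.integral_same
      linarith
    rw [hset, hIcc _ _ (by linarith), hΦodd, ENNReal.toReal_ofReal (by linarith)]
    ring
  set W : ℝ → ℝ := fun d => Φ (d + qna) - Φ (d - qna) with hW_def
  have hWnn : ∀ d, 0 ≤ W d := by
    intro d
    have h := hΦmono (d - qna) (d + qna) (by linarith)
    simp only [hW_def]
    linarith
  have hWIcc : ∀ d : ℝ, Pe (Set.Icc (d - qna) (d + qna)) = ENNReal.ofReal (W d) :=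
    fun d => hIcc _ _ (by linarith)
  have hW1 : ∀ d, W d ≤ 1 := by
    intro d
    have h := prob_le_one (μ := Pe) (s := Set.Icc (d - qna) (d + qna))
    rw [hWIcc d] at h
    exact ENNReal.ofReal_le_one.mp h
  have hWcont : Continuous W := by
    have hΦcont : Continuous Φ := intervalIntegral.continuous_primitive hii 0
    exact (hΦcont.comp (continuous_id.add continuous_const)).sub
      (hΦcont.comp (continuous_id.sub continuous_const))
  set g : ℝ → ℝ := fun s => fp (s + qna) - fp (s - qna) with hg_def
  have hgcont : Continuous g :=
    (hfpcont.comp (continuous_id.add continuous_const)).sub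
      (hfpcont.comp (continuous_id.sub continuous_const))
  have hgb : ∀ s : ℝ, |g s| ≤ M * |s| := by
    intro s
    have hgsplit : g s = (fp (s + qna) - fp qna) + (fp qna - fp (s - qna)) := by
      simp only [hg_def]; ring
    have h1 : |fp (s + qna) - fp qna| ≤ M / 2 * |s| := by
      have h := hlip (s + qna) qna
      simpa [add_sub_cancel_right] using h
    have h2 : |fp qna - fp (s - qna)| ≤ M / 2 * |s| := by
      have h := hlip (-qna) (s - qna)
      rw [hfpeven qna] at h
      have he : |(-qna : ℝ) - (s - qna)| = |s| := by
        rw [show (-qna : ℝ) - (s - qna) = -s by ring, abs_neg]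
      rw [he] at h
      exact h
    calc |g s| = |(fp (s + qna) - fp qna) + (fp qna - fp (s - qna))| := by rw [hgsplit]
      _ ≤ |fp (s + qna) - fp qna| + |fp qna - fp (s - qna)| := abs_add_le _ _
      _ ≤ M / 2 * |s| + M / 2 * |s| := add_le_add h1 h2
      _ = M * |s| := by ring
  have hWsub : ∀ d : ℝ, W d - W 0 = ∫ s in (0:ℝ)..d, g s := by
    intro d
    have e1 : ∫ s in (0:ℝ)..d, fp (s + qna) = Φ (d + qna) - Φ qna := by
      rw [intervalIntegral.integral_comp_add_right fp qna, zero_add, hΦab]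
    have e2 : ∫ s in (0:ℝ)..d, fp (s - qna) = Φ (d - qna) - Φ (-qna) := by
      rw [intervalIntegral.integral_comp_sub_right fp qna, zero_sub, hΦab]
    have e3 : ∫ s in (0:ℝ)..d, g s
        = (∫ s in (0:ℝ)..d, fp (s + qna)) - ∫ s in (0:ℝ)..d, fp (s - qna) := by
      simp only [hg_def]
      exact intervalIntegral.integral_sub
        ((hfpcont.comp (continuous_id.add continuous_const)).intervalIntegrable _ _)
        ((hfpcont.comp (continuous_id.sub continuous_const)).intervalIntegrable _ _)
    rw [e3, e1, e2]
    simp only [hW_def, zero_add, zero_sub, hΦodd]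
    ring
  have hWd : ∀ d : ℝ, |W d - W 0| ≤ M / 2 * d ^ 2 := by
    intro d
    rw [hWsub d]
    rcases le_total 0 d with hd | hd
    · calc |∫ s in (0:ℝ)..d, g s| ≤ ∫ s in (0:ℝ)..d, |g s| :=
            intervalIntegral.abs_integral_le_integral_abs hd
        _ ≤ ∫ s in (0:ℝ)..d, M * s := by
            refine intervalIntegral.integral_mono_on hd
              (hgcont.abs.intervalIntegrable _ _)
              ((continuous_const.mul continuous_id).intervalIntegrable _ _) ?_
            intro s hs
            have h := hgb s
            rwa [abs_of_nonneg hs.1] at h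
        _ = M / 2 * d ^ 2 := by
            rw [intervalIntegral.integral_const_mul, integral_id]
            ring
    · rw [intervalIntegral.integral_symm, abs_neg]
      calc |∫ s in d..(0:ℝ), g s| ≤ ∫ s in d..(0:ℝ), |g s| :=
            intervalIntegral.abs_integral_le_integral_abs hd
        _ ≤ ∫ s in d..(0:ℝ), M * (-s) := by
            refine intervalIntegral.integral_mono_on hd
              (hgcont.abs.intervalIntegrable _ _)
              ((continuous_const.mul continuous_id.neg).intervalIntegrable _ _) ?_
            intro s hs
            have h := hgb s
            rwa [abs_of_nonpos hs.2] at h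
        _ = M / 2 * d ^ 2 := by
            rw [intervalIntegral.integral_const_mul, intervalIntegral.integral_neg,
              integral_id]
            ring
  -- Fubini
  set κ := ν.prod Px with hκ_def
  set Δ : T × E → ℝ := fun p => μhat p.1 p.2 - μReg p.2 with hΔ_def
  set DD := ∫ p : T × E, (μhat p.1 p.2 - μReg p.2) ^ 2 ∂κ with hDD
  have hΔmeas : Measurable Δ := hmeas.sub (hmreg.comp measurable_snd)
  set S : Set (T × E × ℝ) := {p : T × E × ℝ | |μReg p.2.1 + p.2.2 - μhat p.1 p.2.1| ≤ qna}
    with hS_def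
  have hφmeas : Measurable fun p : T × E × ℝ => μReg p.2.1 + p.2.2 - μhat p.1 p.2.1 :=
    ((hmreg.comp (measurable_fst.comp measurable_snd)).add
      (measurable_snd.comp measurable_snd)).sub
      (hmeas.comp (measurable_fst.prodMk (measurable_fst.comp measurable_snd)))
  have hS : MeasurableSet S := measurableSet_le hφmeas.abs measurable_const
  have hA : (ν.prod (Px.prod Pe)) S = ∫⁻ p, ENNReal.ofReal (W (Δ p)) ∂κ := by
    rw [Measure.prod_apply hS]
    have hstep : ∀ t : T, (Px.prod Pe) (Prod.mk t ⁻¹' S)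
        = ∫⁻ x, ENNReal.ofReal (W (μhat t x - μReg x)) ∂Px := by
      intro t
      have hSt : MeasurableSet (Prod.mk t ⁻¹' S) := measurable_prodMk_left hS
      rw [Measure.prod_apply hSt]
      refine lintegral_congr fun x => ?_
      have hset : (Prod.mk x ⁻¹' (Prod.mk t ⁻¹' S))
          = Set.Icc (μhat t x - μReg x - qna) (μhat t x - μReg x + qna) := by
        ext e
        simp only [hS_def, Set.mem_preimage, Set.mem_setOf_eq, Set.mem_Icc, abs_le]
        constructor
        · rintro ⟨h1, h2⟩; constructor <;> linarith
        · rintro ⟨h1, h2⟩; constructor <;> linarith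
      rw [hset, hWIcc]
    rw [lintegral_congr hstep]
    have hmeas' : Measurable fun p : T × E => ENNReal.ofReal (W (Δ p)) :=
      ENNReal.measurable_ofReal.comp (hWcont.measurable.comp hΔmeas)
    exact (lintegral_prod _ hmeas'.aemeasurable).symm
  have hWDint : Integrable (fun p => W (Δ p)) κ := by
    refine Integrable.mono' (integrable_const (1 : ℝ))
      (hWcont.measurable.comp hΔmeas).aestronglyMeasurable
      (Filter.Eventually.of_forall fun p => ?_)
    rw [Real.norm_eq_abs, abs_of_nonneg (hWnn (Δ p))]
    exact hW1 (Δ p)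
  have hGeq : ∫ p, W (Δ p) ∂κ = 1 - α := by
    have h1 : ((ν.prod (Px.prod Pe)) S).toReal = ∫ p, W (Δ p) ∂κ := by
      rw [hA, ← MeasureTheory.ofReal_integral_eq_lintegral_ofReal hWDint
        (Filter.Eventually.of_forall fun p => hWnn (Δ p)),
        ENNReal.toReal_ofReal (integral_nonneg fun p => hWnn (Δ p))]
    rw [← h1]
    exact hqna
  -- CDF comparison
  have hAest : |W 0 - (1 - α)| ≤ M / 2 * DD := by
    have hsubint : Integrable (fun p => W 0 - W (Δ p)) κ := (integrable_const _).sub hWDint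
    have e1 : ∫ p, (W 0 - W (Δ p)) ∂κ = W 0 - (1 - α) := by
      rw [integral_sub (integrable_const _) hWDint, integral_const, hGeq]
      simp [measure_univ]
    have e2 : |∫ p, (W 0 - W (Δ p)) ∂κ|
        ≤ ∫ p : T × E, M / 2 * (μhat p.1 p.2 - μReg p.2) ^ 2 ∂κ := by
      calc |∫ p, (W 0 - W (Δ p)) ∂κ| ≤ ∫ p, |W 0 - W (Δ p)| ∂κ := by
            simpa [Real.norm_eq_abs] using
              MeasureTheory.norm_integral_le_integral_norm (μ := κ)
                (fun p => W 0 - W (Δ p))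
        _ ≤ ∫ p : T × E, M / 2 * (μhat p.1 p.2 - μReg p.2) ^ 2 ∂κ := by
            refine integral_mono hsubint.abs (hint.const_mul (M / 2)) fun p => ?_
            rw [abs_sub_comm]
            exact hWd (Δ p)
    rw [e1] at e2
    calc |W 0 - (1 - α)| ≤ ∫ p : T × E, M / 2 * (μhat p.1 p.2 - μReg p.2) ^ 2 ∂κ := e2
      _ = M / 2 * DD := by rw [MeasureTheory.integral_const_mul, hDD]
  have hW0val : W 0 = 2 * Φ qna := by
    simp only [hW_def, zero_add, zero_sub, hΦodd]
    ring
  have hqa2 : 2 * Φ qa = 1 - α := by rw [← hF qa hqa_pos]; exact hqa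
  have hclose : |Φ qna - Φ qa| ≤ M / 4 * DD := by
    have h := hAest
    rw [hW0val, ← hqa2] at h
    have h2 : |2 * Φ qna - 2 * Φ qa| = 2 * |Φ qna - Φ qa| := by
      rw [show 2 * Φ qna - 2 * Φ qa = 2 * (Φ qna - Φ qa) by ring, abs_mul, abs_two]
    rw [h2] at h
    linarith
  -- local strict increase of Φ
  have hinc : ∀ a b : ℝ, qa - η < a → a ≤ b → b < qa + η → r / 2 * (b - a) ≤ Φ b - Φ a := by
    intro a b h1 h2 h3
    rw [← hΦab]
    calc r / 2 * (b - a) = ∫ _ in a..b, (r / 2 : ℝ) := by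
          rw [intervalIntegral.integral_const, smul_eq_mul]; ring
      _ ≤ ∫ s in a..b, fp s := by
          refine intervalIntegral.integral_mono_on h2 intervalIntegrable_const
            (hii a b) fun s hs => ?_
          have hsI : s ∈ Set.Ioo (qa - η) (qa + η) :=
            ⟨lt_of_lt_of_le h1 hs.1, lt_of_le_of_lt hs.2 h3⟩
          have hds := hdens s hsI
          have : r / 2 ≤ f₀ s := by linarith
          exact le_trans this (le_max_left _ _)
  -- conclusion
  have hDD0 : 0 ≤ DD := by
    rw [hDD]
    exact integral_nonneg fun p => sq_nonneg _
  set δ := M / (2 * r) * DD with hδ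
  have hδ0 : 0 ≤ δ := mul_nonneg (by positivity) hDD0
  have hηpos : 0 < η := lt_of_le_of_lt hδ0 hη
  have hrel : r / 2 * δ = M / 4 * DD := by
    rw [hδ]
    field_simp
    ring
  by_contra hcon
  push_neg at hcon
  rcases le_or_gt qa qna with hle | hlt
  · have habs : |qna - qa| = qna - qa := abs_of_nonneg (by linarith)
    rw [habs] at hcon
    set b := min qna (qa + (δ + η) / 2) with hb
    have hb1 : qa ≤ b := le_min (by linarith) (by linarith)
    have hb2 : b < qa + η := lt_of_le_of_lt (min_le_right _ _) (by linarith)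
    have happ := hinc qa b (by linarith) hb1 hb2
    have hb4 : δ < b - qa := by
      have h := lt_min (show qa + δ < qna by linarith)
        (show qa + δ < qa + (δ + η) / 2 by linarith)
      rw [hb]
      linarith
    have hmb : Φ b ≤ Φ qna := hΦmono _ _ (min_le_left _ _)
    have hub := (abs_le.mp hclose).2
    have hmul : r / 2 * δ < r / 2 * (b - qa) :=
      mul_lt_mul_of_pos_left hb4 (by linarith)
    linarith
  · have habs : |qna - qa| = qa - qna := by
      rw [abs_of_neg (by linarith)]; ring
    rw [habs] at hcon
    set a := max qna (qa - (δ + η) / 2) with ha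
    have ha1 : a ≤ qa := max_le (by linarith) (by linarith)
    have ha2 : qa - η < a := lt_of_lt_of_le (by linarith) (le_max_right _ _)
    have happ := hinc a qa ha2 ha1 (by linarith)
    have ha4 : δ < qa - a := by
      have h := max_lt (show qna < qa - δ by linarith)
        (show qa - (δ + η) / 2 < qa - δ by linarith)
      rw [ha]
      linarith
    have hma : Φ qna ≤ Φ a := hΦmono _ _ (le_max_left _ _)
    have hlb := (abs_le.mp hclose).1
    have hmul : r / 2 * δ < r / 2 * (qa - a) :=
      mul_lt_mul_of_pos_left ha4 (by linarith)
    linarith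
end

section
/- (DKW-based quantile separation for multiple splits) Let F̃ be a continuous CDF, and let F̃_{n,1},...,F̃_{n,N} be empirical CDFs each from n i.i.d. samples from F̃. For α ∈ (0,1) and 2 ≤ N ≤ αn, P(min_{j=1,...,N} F̃_{n,j}^{-1}(1-α/N) ≤ F̃^{-1}(1-α/1.6)) ≤ 2N exp(-nα²/32), and P(F̃_{n,1}^{-1}(1-α) ≥ F̃^{-1}(1-α/1.4)) ≤ 2exp(-nα²/8). Hence with probability at least 1 - 2exp(-nα²/8) - 2N exp(-nα²/32), min_j F̃_{n,j}^{-1}(1-α/N) - F̃_{n,1}^{-1}(1-α) ≥ F̃^{-1}(1-α/1.6) - F̃^{-1}(1-α/1.4) > 0. -/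
/-!
Only the pointwise form of the DKW inequality is needed, i.e. Hoeffding's inequality for the
number of sample points in a fixed half-line. If `empInv n x β ≤ q`, at least `βn` points of `x`
lie in `(-∞, q]`; if `q ≤ empInv n x β`, at most `βn` lie in `(-∞, q)`. By continuity, `F` takes
exactly the values `1 - α/1.6` and `1 - α/1.4` at the two population quantiles, so the first event
(at level `1 - α/N ≥ 1 - α/2`) makes the empirical frequency of `(-∞, q_{1-α/1.6}]` exceed its
probability by at least `α/8`, and the second makes that of `[q_{1-α/1.4}, ∞)` exceed its
probability by at least `α/4`. Union bounds over the splits and over the two events give the rest.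
-/

open MeasureTheory Finset

open scoped Classical

/-- Empirical quantile function: `empInv n x p` is the generalized inverse, at
level `p`, of the empirical CDF of the sample `x : Fin n → ℝ`. -/
noncomputable def empInv (n : ℕ) (x : Fin n → ℝ) (p : ℝ) : ℝ :=
  sInf {t : ℝ | p ≤ ((Finset.univ.filter fun i => x i ≤ t).card : ℝ) / n}

open Filter Topology ProbabilityTheory
open scoped NNReal

section Hoeffding

variable {X : Type*} [MeasurableSpace X] (μ : Measure X) [IsProbabilityMeasure μ]

theorem measure_le_card_filter_mem_le {S : Set X} (hS : MeasurableSet S) (n : ℕ) {δ : ℝ}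
    (hδ : 0 ≤ δ) :
    Measure.pi (fun _ : Fin n => μ) {x | (μ.real S + δ) * n ≤ #{i | x i ∈ S}}
      ≤ ENNReal.ofReal (Real.exp (-2 * n * δ ^ 2)) := by
  set Z : X → ℝ := S.indicator 1
  have hZ : Measurable Z := measurable_const.indicator hS
  have hZ_int : μ[Z] = μ.real S := integral_indicator_one hS
  have hZ_subG : HasSubgaussianMGF (fun y => Z y - μ.real S) (1 / 4) μ := by
    have h := hasSubgaussianMGF_of_mem_Icc (a := 0) (b := 1) hZ.aemeasurable
      (ae_of_all μ fun y => ⟨Set.indicator_nonneg (fun _ _ => zero_le_one) y,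
        Set.indicator_le_self' (fun _ _ => zero_le_one) y⟩)
    rw [hZ_int] at h
    convert h using 1
    norm_num
  have h_indep : iIndepFun (fun i (x : Fin n → X) => Z (x i) - μ.real S)
      (Measure.pi fun _ => μ) :=
    iIndepFun_pi fun _ => (hZ.sub_const _).aemeasurable
  have h_subG : ∀ i : Fin n, HasSubgaussianMGF (fun x : Fin n → X => Z (x i) - μ.real S) (1 / 4)
      (Measure.pi fun _ => μ) := fun i => by
    refine HasSubgaussianMGF.of_map (Y := fun x : Fin n → X => x i)
      (X := fun y => Z y - μ.real S) (measurable_pi_apply i).aemeasurable ?_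
    rwa [(measurePreserving_eval (fun _ => μ) i).map_eq]
  have hoeffding := HasSubgaussianMGF.measure_sum_ge_le_of_iIndepFun h_indep (s := univ)
    (fun i _ => h_subG i) (ε := n * δ) (by positivity)
  have hevent : {x : Fin n → X | (μ.real S + δ) * n ≤ #{i | x i ∈ S}}
      = {x | n * δ ≤ ∑ i, (Z (x i) - μ.real S)} := by
    ext x
    have hsum : ∑ i, (Z (x i) - μ.real S) = #{i | x i ∈ S} - n * μ.real S := by
      simp [sum_sub_distrib, Z, Set.indicator_apply, sum_boole]
    simp only [Set.mem_ofPred_eq, hsum]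
    constructor <;> intro h <;> linarith
  have hexponent : -(n * δ) ^ 2 / (2 * ((∑ _i : Fin n, (1 / 4 : ℝ≥0) : ℝ≥0) : ℝ))
      = -2 * n * δ ^ 2 := by
    rcases Nat.eq_zero_or_pos n with rfl | hn
    · simp
    · simp only [sum_const, card_univ, Fintype.card_fin, nsmul_eq_mul, NNReal.coe_mul,
        NNReal.coe_natCast, one_div, NNReal.coe_inv, NNReal.coe_ofNat]
      field_simp
      ring
  rw [← ofReal_measureReal, hevent, ← hexponent]
  exact ENNReal.ofReal_le_ofReal hoeffding

end Hoeffding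

section EmpiricalCount

variable {ι : Type*} [Fintype ι] (x : ι → ℝ) (q : ℝ)

theorem eventually_card_filter_le_eq_nhdsGT :
    ∀ᶠ t in 𝓝[>] q, #{i | x i ≤ t} = #{i | x i ≤ q} := by
  have h : ∀ i, ∀ᶠ t in 𝓝[>] q, (x i ≤ t ↔ x i ≤ q) := fun i => by
    rcases le_or_gt (x i) q with hi | hi
    · filter_upwards [self_mem_nhdsWithin] with t ht using iff_of_true (hi.trans ht.le) hi
    · filter_upwards [nhdsWithin_le_nhds (eventually_lt_nhds hi)] with t ht
        using iff_of_false ht.not_ge hi.not_ge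
  filter_upwards [eventually_all.2 h] with t ht using congrArg card (filter_congr fun i _ => ht i)

theorem eventually_card_filter_le_eq_nhdsLT :
    ∀ᶠ t in 𝓝[<] q, #{i | x i ≤ t} = #{i | x i < q} := by
  have h : ∀ i, ∀ᶠ t in 𝓝[<] q, (x i ≤ t ↔ x i < q) := fun i => by
    rcases lt_or_ge (x i) q with hi | hi
    · filter_upwards [nhdsWithin_le_nhds (eventually_gt_nhds hi)] with t ht
        using iff_of_true ht.le hi
    · filter_upwards [self_mem_nhdsWithin] with t ht
        using iff_of_false (fun h => (h.trans_lt ht).not_ge hi) hi.not_gt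
  filter_upwards [eventually_all.2 h] with t ht using congrArg card (filter_congr fun i _ => ht i)

end EmpiricalCount

section EmpInv

variable {n : ℕ} (x : Fin n → ℝ) {β q : ℝ}

theorem le_card_filter_le_of_empInv_le (hβ : β ≤ 1) (h : empInv n x β ≤ q) :
    β * n ≤ #{i | x i ≤ q} := by
  rcases Nat.eq_zero_or_pos n with rfl | hn
  · simp
  have hn' : (0 : ℝ) < n := Nat.cast_pos.2 hn
  by_contra! hlt
  obtain ⟨u, hqu, hu⟩ :=
    mem_nhdsGT_iff_exists_Ioo_subset.1 (eventually_card_filter_le_eq_nhdsGT x q)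
  have hmax : (⨆ i, x i) ∈ {t : ℝ | β ≤ (#{i | x i ≤ t} : ℝ) / n} := by
    have : #{i | x i ≤ ⨆ i, x i} = n := by
      rw [filter_true_of_mem fun i _ => le_ciSup (Set.finite_range x).bddAbove i, card_univ,
        Fintype.card_fin]
    simpa [this, hn'.ne'] using hβ
  have hle : u ≤ empInv n x β := by
    refine le_csInf ⟨_, hmax⟩ fun t ht => ?_
    by_contra! htu
    have hcard : (#{i | x i ≤ t} : ℝ) ≤ #{i | x i ≤ q} := Nat.cast_le.2 <| by
      rcases le_or_gt t q with htq | hqt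
      · exact card_le_card (monotone_filter_right _ fun i _ h => h.trans htq)
      · exact (hu ⟨hqt, htu⟩).le
    linarith [(le_div_iff₀ hn').1 ht]
  exact (hle.trans h).not_gt hqu

theorem card_filter_lt_le_of_le_empInv (hβ : 0 < β) (h : q ≤ empInv n x β) :
    #{i | x i < q} ≤ β * n := by
  rcases Nat.eq_zero_or_pos n with rfl | hn
  · simp
  have hn' : (0 : ℝ) < n := Nat.cast_pos.2 hn
  have hbdd : BddBelow {t : ℝ | β ≤ (#{i | x i ≤ t} : ℝ) / n} := by
    refine ⟨⨅ i, x i, fun t ht => ?_⟩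
    have hpos : 0 < #{i | x i ≤ t} := by
      have : (0 : ℝ) < #{i | x i ≤ t} := div_pos_iff_of_pos_right hn' |>.1 (hβ.trans_le ht)
      exact_mod_cast this
    obtain ⟨i, hi⟩ := card_pos.1 hpos
    exact (ciInf_le (Set.finite_range x).bddBelow i).trans (mem_filter.1 hi).2
  obtain ⟨t, ht, htq⟩ :=
    ((eventually_card_filter_le_eq_nhdsLT x q).and self_mem_nhdsWithin).exists
  have hnot := notMem_of_lt_csInf (htq.trans_le h) hbdd
  rw [Set.mem_ofPred_eq, not_le, div_lt_iff₀ hn', ht] at hnot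
  exact hnot.le

end EmpInv

theorem measure_pi_exists_mem_le {ι Ω : Type*} [Fintype ι] [MeasurableSpace Ω] (ν : Measure Ω)
    [IsProbabilityMeasure ν] (E : Set Ω) :
    Measure.pi (fun _ : ι => ν) {ω | ∃ j, ω j ∈ E} ≤ Fintype.card ι * ν E := by
  have hunion : {ω : ι → Ω | ∃ j, ω j ∈ E} = ⋃ j, (fun ω => ω j) ⁻¹' E := by ext; simp
  calc Measure.pi (fun _ : ι => ν) {ω | ∃ j, ω j ∈ E}
      ≤ ∑ j, Measure.pi (fun _ : ι => ν) ((fun ω => ω j) ⁻¹' E) :=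
        hunion ▸ measure_iUnion_fintype_le _ _
    _ ≤ ∑ _j : ι, ν E :=
        sum_le_sum fun j _ => (measurePreserving_eval (fun _ => ν) j).measure_preimage_le E
    _ = Fintype.card ι * ν E := by rw [sum_const, card_univ, nsmul_eq_mul]

section EmpiricalTail

variable (μ : Measure ℝ) [IsProbabilityMeasure μ] (n : ℕ) {β q δ : ℝ}

theorem measure_empInv_le_le (hδ : 0 ≤ δ) (hβ : μ.real (Set.Iic q) + δ ≤ β) (hβ1 : β ≤ 1) :
    Measure.pi (fun _ : Fin n => μ) {x | empInv n x β ≤ q}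
      ≤ ENNReal.ofReal (Real.exp (-2 * n * δ ^ 2)) := by
  refine (measure_mono fun x hx => ?_).trans
    (measure_le_card_filter_mem_le μ (measurableSet_Iic (a := q)) n hδ)
  exact (mul_le_mul_of_nonneg_right hβ n.cast_nonneg).trans
    (le_card_filter_le_of_empInv_le x hβ1 hx)

theorem measure_le_empInv_le (hδ : 0 ≤ δ) (hβ : 0 < β) (hβq : β + δ ≤ μ.real (Set.Iio q)) :
    Measure.pi (fun _ : Fin n => μ) {x | q ≤ empInv n x β}
      ≤ ENNReal.ofReal (Real.exp (-2 * n * δ ^ 2)) := by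
  refine (measure_mono fun x hx => ?_).trans
    (measure_le_card_filter_mem_le μ (measurableSet_Ici (a := q)) n hδ)
  have hlt := card_filter_lt_le_of_le_empInv x hβ hx
  have hsplit : (#{i | q ≤ x i} : ℝ) = n - #{i | x i < q} := by
    rw [eq_sub_iff_add_eq, ← Nat.cast_add]
    simp_rw [← not_lt]
    rw [add_comm, card_filter_add_card_filter_not, card_univ, Fintype.card_fin]
  have hIci : μ.real (Set.Ici q) = 1 - μ.real (Set.Iio q) := by
    rw [← Set.compl_Iio, probReal_compl_eq_one_sub measurableSet_Iio]
  simp only [Set.mem_ofPred_eq, Set.mem_Ici]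
  rw [hsplit, hIci]
  linarith [mul_le_mul_of_nonneg_right hβq n.cast_nonneg]

theorem measure_exists_empInv_le_le (N : ℕ) (hδ : 0 ≤ δ) (hβ : μ.real (Set.Iic q) + δ ≤ β)
    (hβ1 : β ≤ 1) :
    (Measure.pi fun _ : Fin N => Measure.pi fun _ : Fin n => μ) {ω | ∃ j, empInv n (ω j) β ≤ q}
      ≤ ENNReal.ofReal (N * Real.exp (-2 * n * δ ^ 2)) :=
  calc _ ≤ Fintype.card (Fin N) * (Measure.pi fun _ : Fin n => μ) {x | empInv n x β ≤ q} :=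
        measure_pi_exists_mem_le _ _
    _ ≤ N * ENNReal.ofReal (Real.exp (-2 * n * δ ^ 2)) := by
        rw [Fintype.card_fin]
        gcongr
        exact measure_empInv_le_le μ n hδ hβ hβ1
    _ = ENNReal.ofReal (N * Real.exp (-2 * n * δ ^ 2)) := by
        rw [ENNReal.ofReal_mul N.cast_nonneg, ENNReal.ofReal_natCast]

end EmpiricalTail

section ContinuousCDF

variable {μ : Measure ℝ}

theorem measureReal_Iio_eq_cdf [IsProbabilityMeasure μ] (hμ : Continuous (cdf μ)) (t : ℝ) :
    μ.real (Set.Iio t) = cdf μ t := by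
  have h := (cdf μ).measure_Iio (tendsto_cdf_atBot μ) t
  rw [measure_cdf, hμ.continuousWithinAt.leftLim_eq, sub_zero] at h
  rw [measureReal_def, h, ENNReal.toReal_ofReal (cdf_nonneg μ t)]

theorem cdf_sInf_setOf_le_cdf (hμ : Continuous (cdf μ)) {p : ℝ} (hp : p ∈ Set.Ioo 0 1) :
    cdf μ (sInf {t | p ≤ cdf μ t}) = p := by
  set T := {t | p ≤ cdf μ t}
  obtain ⟨t₁, ht₁⟩ := ((tendsto_cdf_atTop μ).eventually (eventually_ge_nhds hp.2)).exists
  obtain ⟨t₀, ht₀⟩ :=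
    ((tendsto_cdf_atBot μ).eventually (eventually_lt_nhds hp.1)).exists_forall_of_atBot
  have hbdd : BddBelow T :=
    ⟨t₀, fun t ht => le_of_not_gt fun htt₀ => (ht₀ t htt₀.le).not_ge ht⟩
  refine le_antisymm ?_ (isClosed_le continuous_const hμ |>.csInf_mem ⟨t₁, ht₁⟩ hbdd)
  refine le_of_tendsto (hμ.continuousWithinAt (s := Set.Iio (sInf T)))
    (eventually_nhdsWithin_of_forall fun t ht => ?_)
  exact (not_le.1 (notMem_of_lt_csInf (s := T) ht hbdd)).le

end ContinuousCDF

theorem ofReal_one_sub_sub_le_measure {Ω : Type*} [MeasurableSpace Ω] (P : Measure Ω)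
    [IsProbabilityMeasure P] {A B C : Set Ω} {a b : ℝ} (ha : 0 ≤ a) (hb : 0 ≤ b)
    (hA : P A ≤ ENNReal.ofReal a) (hB : P B ≤ ENNReal.ofReal b) (hC : Cᶜ ⊆ A ∪ B) :
    ENNReal.ofReal (1 - a - b) ≤ P C := by
  rw [sub_sub, ENNReal.ofReal_sub _ (add_nonneg ha hb), ENNReal.ofReal_one,
    ENNReal.ofReal_add ha hb, tsub_le_iff_left]
  calc 1 = P (C ∪ Cᶜ) := by rw [Set.union_compl_self, measure_univ]
    _ ≤ P C + (P A + P B) := by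
      grw [measure_union_le C, measure_mono hC, measure_union_le A]
    _ ≤ ENNReal.ofReal a + ENNReal.ofReal b + P C := by
      rw [add_comm]; gcongr

/-- DKW-based quantile separation for multiple splits: let `F̃` be a
continuous CDF (of the law `Q`) and `F̃_{n,1}, …, F̃_{n,N}` empirical CDFs, each of
`n` i.i.d. samples from `Q` (all samples independent). For `α ∈ (0,1)` and
`2 ≤ N ≤ αn`:
(a) `P(min_j F̃_{n,j}⁻¹(1-α/N) ≤ F̃⁻¹(1-α/1.6)) ≤ 2N exp(-nα²/32)`;
(b) `P(F̃_{n,1}⁻¹(1-α) ≥ F̃⁻¹(1-α/1.4)) ≤ 2 exp(-nα²/8)`;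
(c) hence with probability at least `1 - 2exp(-nα²/8) - 2N exp(-nα²/32)`,
`min_j F̃_{n,j}⁻¹(1-α/N) - F̃_{n,1}⁻¹(1-α) ≥ F̃⁻¹(1-α/1.6) - F̃⁻¹(1-α/1.4) > 0`
(strict positivity using continuity and strict monotonicity of `F̃` near these
quantiles). -/
theorem dkw_quantile_separation
    (Q : Measure ℝ) [IsProbabilityMeasure Q]
    (n N : ℕ) (α : ℝ) (hα : α ∈ Set.Ioo (0 : ℝ) 1)
    (hN : 2 ≤ N)
    (F : ℝ → ℝ) (hF : ∀ t, F t = (Q (Set.Iic t)).toReal) (hFcont : Continuous F)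
    (qF : ℝ → ℝ) (hqF : ∀ p, qF p = sInf {t | p ≤ F t}) :
    (Measure.pi fun _ : Fin N => Measure.pi fun _ : Fin n => Q)
        {ω | ∃ j : Fin N, empInv n (ω j) (1 - α / N) ≤ qF (1 - α / 1.6)}
      ≤ ENNReal.ofReal (2 * N * Real.exp (-(n : ℝ) * α ^ 2 / 32))
    ∧
    (Measure.pi fun _ : Fin N => Measure.pi fun _ : Fin n => Q)
        {ω | qF (1 - α / 1.4) ≤ empInv n (ω ⟨0, by omega⟩) (1 - α)}
      ≤ ENNReal.ofReal (2 * Real.exp (-(n : ℝ) * α ^ 2 / 8))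
    ∧
    (ENNReal.ofReal (1 - 2 * Real.exp (-(n : ℝ) * α ^ 2 / 8)
          - 2 * N * Real.exp (-(n : ℝ) * α ^ 2 / 32)) ≤
        (Measure.pi fun _ : Fin N => Measure.pi fun _ : Fin n => Q)
          {ω | ∀ j : Fin N,
            qF (1 - α / 1.6) - qF (1 - α / 1.4)
              ≤ empInv n (ω j) (1 - α / N) - empInv n (ω ⟨0, by omega⟩) (1 - α)}) 
    ∧ 0 < qF (1 - α / 1.6) - qF (1 - α / 1.4) := by
  obtain ⟨hα0, hα1⟩ := hα
  obtain rfl : F = cdf Q := funext fun t => by rw [hF, cdf_eq_real, measureReal_def]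
  have h16 : α / 1.6 = 5 / 8 * α := by norm_num [div_eq_mul_inv]; ring
  have h14 : α / 1.4 = 5 / 7 * α := by norm_num [div_eq_mul_inv]; ring
  have hq16 : cdf Q (qF (1 - α / 1.6)) = 1 - α / 1.6 :=
    hqF _ ▸ cdf_sInf_setOf_le_cdf hFcont ⟨by linarith, by linarith⟩
  have hq14 : cdf Q (qF (1 - α / 1.4)) = 1 - α / 1.4 :=
    hqF _ ▸ cdf_sInf_setOf_le_cdf hFcont ⟨by linarith, by linarith⟩
  have hαN : α / N ≤ α / 2 := div_le_div_of_nonneg_left hα0.le two_pos (by exact_mod_cast hN)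
  have hA : (Measure.pi fun _ : Fin N => Measure.pi fun _ : Fin n => Q)
        {ω | ∃ j : Fin N, empInv n (ω j) (1 - α / N) ≤ qF (1 - α / 1.6)}
      ≤ ENNReal.ofReal (2 * N * Real.exp (-(n : ℝ) * α ^ 2 / 32)) := by
    refine (measure_exists_empInv_le_le Q n N (δ := α / 8) (by positivity) ?_
      (sub_le_self _ (by positivity))).trans (ENNReal.ofReal_le_ofReal ?_)
    · rw [← cdf_eq_real, hq16]
      linarith
    · rw [show -2 * n * (α / 8) ^ 2 = -(n : ℝ) * α ^ 2 / 32 by ring, mul_assoc 2]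
      exact le_mul_of_one_le_left (by positivity) one_le_two
  have hB : (Measure.pi fun _ : Fin N => Measure.pi fun _ : Fin n => Q)
        {ω | qF (1 - α / 1.4) ≤ empInv n (ω ⟨0, by omega⟩) (1 - α)}
      ≤ ENNReal.ofReal (2 * Real.exp (-(n : ℝ) * α ^ 2 / 8)) := by
    refine ((measurePreserving_eval (fun _ : Fin N => Measure.pi fun _ : Fin n => Q)
      ⟨0, by omega⟩).measure_preimage_le {x | qF (1 - α / 1.4) ≤ empInv n x (1 - α)}).trans <|
      (measure_le_empInv_le Q n (δ := α / 4) (by positivity) (by linarith) ?_).trans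
      (ENNReal.ofReal_le_ofReal ?_)
    · rw [measureReal_Iio_eq_cdf hFcont, hq14]
      linarith
    · rw [show -2 * n * (α / 4) ^ 2 = -(n : ℝ) * α ^ 2 / 8 by ring]
      linarith [Real.exp_pos (-(n : ℝ) * α ^ 2 / 8)]
  refine ⟨hA, hB, ofReal_one_sub_sub_le_measure _ (by positivity) (by positivity) hB hA ?_, ?_⟩
  · intro ω hω
    simp only [Set.mem_compl_iff, Set.mem_ofPred_eq, not_forall, not_le] at hω
    obtain ⟨j, hj⟩ := hω
    by_contra! h
    simp only [Set.mem_union, Set.mem_ofPred_eq, not_or, not_exists, not_le] at h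
    linarith [h.2 j]
  · exact sub_pos.2 ((cdf Q).mono.reflect_lt (by rw [hq14, hq16]; linarith))
end
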